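/- arXiv:2009.12290 — 6 statements merged into one kernel-verified Lean document; each statement's English description precedes it below -/
import Mathlib

section
/- If A is an n×n completely positive matrix and A = A₁ ⊕ A₂ ⊕ ⋯ ⊕ A_m is a direct sum decomposition where each A_i has k_i distinct CP factorizations (finitely many), then A has exactly ∏_{i=1}^m k_i distinct CP factorizations. -/
/-!
In a CP factorization of a block-diagonal matrix every column lives in a single block: an entry
outside the diagonal blocks is a sum of the nonnegative products `b p * b q` over the columns, so
each such product vanishes. Hence restricting columns to the block they live in is a bijection
from the CP factorizations of `A` onto tuples of CP factorizations of the blocks; its inverse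
extends by zero and concatenates, and columns from different blocks are automatically linearly
independent.
-/

open Matrix

/-- A CP representation of `A`: a multiset of nonnegative, nonzero, pairwise linearly
independent vectors whose rank-one outer products sum to `A`. Counted as a multiset,
i.e. up to reordering of the summands (columns). -/
def IsCPRep {n : ℕ} (A : Matrix (Fin n) (Fin n) ℝ) (L : Multiset (Fin n → ℝ)) : Prop :=
  (∀ b ∈ L, ∀ i, 0 ≤ b i) ∧ (∀ b ∈ L, b ≠ 0) ∧
  L.Pairwise (fun b c => LinearIndependent ℝ ![b, c]) ∧
  (L.map fun b => vecMulVec b b).sum = A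

/-- `A` is completely positive. -/
def IsCP {n : ℕ} (A : Matrix (Fin n) (Fin n) ℝ) : Prop := ∃ L, IsCPRep A L

/-- The cp-rank: minimal number of rank-one summands in a CP representation. -/
noncomputable def cpRank {n : ℕ} (A : Matrix (Fin n) (Fin n) ℝ) : ℕ :=
  sInf {k | ∃ L, IsCPRep A L ∧ Multiset.card L = k}

/-- A minimal CP representation: a CP representation with `cpRank A` summands. -/
def IsMinCPRep {n : ℕ} (A : Matrix (Fin n) (Fin n) ℝ) (L : Multiset (Fin n → ℝ)) : Prop :=
  IsCPRep A L ∧ Multiset.card L = cpRank A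

/-- The graph of a symmetric matrix: `i ~ j` iff `i ≠ j` and `A i j ≠ 0`. -/
def matGraph {n : ℕ} (A : Matrix (Fin n) (Fin n) ℝ) : SimpleGraph (Fin n) where
  Adj i j := i ≠ j ∧ (A i j ≠ 0 ∨ A j i ≠ 0)
  symm := ⟨fun _ _ h => ⟨h.1.symm, h.2.symm⟩⟩
  loopless := ⟨fun _ h => h.1 rfl⟩

/-- The comparison matrix `M(A)`. -/
noncomputable def compMatrix {n : ℕ} (A : Matrix (Fin n) (Fin n) ℝ) : Matrix (Fin n) (Fin n) ℝ :=
  fun i j => if i = j then |A i j| else -|A i j|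

/-- CP representation, for a general (finite, decidable) index type. -/
def IsCPRepG {ι : Type} [Fintype ι] [DecidableEq ι]
    (A : Matrix ι ι ℝ) (L : Multiset (ι → ℝ)) : Prop :=
  (∀ b ∈ L, ∀ i, 0 ≤ b i) ∧ (∀ b ∈ L, b ≠ 0) ∧
  L.Pairwise (fun b c => LinearIndependent ℝ ![b, c]) ∧
  (L.map fun b => vecMulVec b b).sum = A

namespace Multiset

variable {α β : Type*} {r : α → α → Prop}

theorem Pairwise.map {r' : β → β → Prop} {f : α → β} {s : Multiset α} (h : s.Pairwise r)
    (hf : ∀ a ∈ s, ∀ b ∈ s, r a b → r' (f a) (f b)) : (s.map f).Pairwise r' := by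
  obtain ⟨l, rfl, hl⟩ := h
  exact ⟨l.map f, rfl, List.pairwise_map.2 (hl.imp_of_mem fun ha hb => hf _ ha _ hb)⟩

theorem Pairwise.filter {s : Multiset α} (p : α → Prop) [DecidablePred p] (h : s.Pairwise r) :
    (s.filter p).Pairwise r := by
  obtain ⟨l, rfl, hl⟩ := h
  exact ⟨l.filter p, rfl, hl.sublist List.filter_sublist⟩

theorem Pairwise.add {s t : Multiset α} (hs : s.Pairwise r) (ht : t.Pairwise r)
    (hst : ∀ a ∈ s, ∀ b ∈ t, r a b) : (s + t).Pairwise r := by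
  obtain ⟨l, rfl, hl⟩ := hs
  obtain ⟨l', rfl, hl'⟩ := ht
  exact ⟨l ++ l', rfl, List.pairwise_append.2 ⟨hl, hl', fun a ha b hb => hst a ha b hb⟩⟩

theorem pairwise_finset_sum {κ : Type*} (t : Finset κ) {g : κ → Multiset α}
    (hg : ∀ i ∈ t, (g i).Pairwise r)
    (hne : ∀ i ∈ t, ∀ j ∈ t, i ≠ j → ∀ a ∈ g i, ∀ b ∈ g j, r a b) :
    (∑ i ∈ t, g i).Pairwise r := by
  classical
  induction t using Finset.induction_on with
  | empty => exact pairwise_zero r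
  | insert i t hi ih =>
    rw [Finset.sum_insert hi]
    refine (hg i (t.mem_insert_self i)).add
      (ih (fun j hj => hg j (Finset.mem_insert_of_mem hj))
        fun j hj k hk => hne j (Finset.mem_insert_of_mem hj) k (Finset.mem_insert_of_mem hk))
      fun a ha b hb => ?_
    obtain ⟨j, hj, hbj⟩ := mem_sum.1 hb
    exact hne i (t.mem_insert_self i) j (Finset.mem_insert_of_mem hj) (by rintro rfl; exact hi hj)
      a ha b hbj

theorem filter_finset_sum {κ : Type*} (p : α → Prop) [DecidablePred p] (t : Finset κ)
    (g : κ → Multiset α) : (∑ i ∈ t, g i).filter p = ∑ i ∈ t, (g i).filter p := by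
  classical
  induction t using Finset.induction_on with
  | empty => simp
  | insert i t hi ih => simp [Finset.sum_insert hi, filter_add, ih]

theorem sum_filter_of_existsUnique {κ : Type*} [Fintype κ] (p : κ → α → Prop)
    [∀ i, DecidablePred (p i)] {s : Multiset α} (h : ∀ a ∈ s, ∃! i, p i a) :
    ∑ i, s.filter (p i) = s := by
  induction s using Multiset.induction_on with
  | empty => simp
  | cons a s ih =>
    obtain ⟨i, hi, huniq⟩ := h a (mem_cons_self a s)
    simp only [filter_cons, Finset.sum_add_distrib, ih fun b hb => h b (mem_cons_of_mem hb)]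
    rw [Finset.sum_eq_single i (fun j _ hj => if_neg fun hpj => hj (huniq j hpj)) (by simp),
      if_pos hi, singleton_add]

end Multiset

theorem Set.ncard_univ_pi {ι : Type*} [Fintype ι] {α : ι → Type*} (s : ∀ i, Set (α i)) :
    (Set.univ.pi s).ncard = ∏ i, (s i).ncard := by
  rw [← Nat.card_coe_set_eq, Nat.card_congr (Equiv.Set.univPi s), Nat.card_pi]
  simp only [Nat.card_coe_set_eq]

theorem IsCPRepG.mul_eq_zero_of_apply_eq_zero {κ : Type} [Fintype κ] [DecidableEq κ]
    {A : Matrix κ κ ℝ} {L : Multiset (κ → ℝ)} (hL : IsCPRepG A L) {p q : κ} (hpq : A p q = 0)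
    {b : κ → ℝ} (hb : b ∈ L) : b p * b q = 0 := by
  obtain ⟨hnn, -, -, hsum⟩ := hL
  have hnn' : ∀ c ∈ L, 0 ≤ c p * c q := fun c hc => mul_nonneg (hnn c hc p) (hnn c hc q)
  have hentry : (L.map fun c => c p * c q).sum = 0 := by
    calc (L.map fun c => c p * c q).sum
        = entryAddMonoidHom ℝ p q (L.map fun c => vecMulVec c c).sum := by
          rw [map_multiset_sum, Multiset.map_map]; rfl
      _ = 0 := by rw [entryAddMonoidHom_apply, hsum, hpq]
  refine le_antisymm ?_ (hnn' b hb)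
  rw [← hentry]
  exact Multiset.single_le_sum (by simpa using hnn') _ (Multiset.mem_map_of_mem _ hb)

section Blocks

variable {ι : Type} {d : ι → Type}

def blockRes (i : ι) : ((Σ j, d j) → ℝ) →ₗ[ℝ] (d i → ℝ) :=
  LinearMap.funLeft ℝ ℝ (Sigma.mk i)

@[simp]
theorem blockRes_apply (i : ι) (b : (Σ j, d j) → ℝ) (x : d i) : blockRes i b x = b ⟨i, x⟩ := rfl

variable [DecidableEq ι]

def blockExt (i : ι) : (d i → ℝ) →ₗ[ℝ] ((Σ j, d j) → ℝ) where
  toFun v p := Pi.single (M := fun j => d j → ℝ) i v p.1 p.2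
  map_add' v w := by ext p; simp [Pi.single_add]
  map_smul' c v := by ext p; simp [Pi.single_smul]

@[simp]
theorem blockExt_apply_self (i : ι) (v : d i → ℝ) (x : d i) : blockExt i v ⟨i, x⟩ = v x := by
  simp [blockExt]

theorem blockExt_apply_of_ne {i j : ι} (h : j ≠ i) (v : d i → ℝ) (x : d j) :
    blockExt i v ⟨j, x⟩ = 0 := by
  simp [blockExt, h]

@[simp]
theorem blockRes_blockExt_self (i : ι) (v : d i → ℝ) : blockRes i (blockExt i v) = v := by
  ext x; simp

theorem blockRes_blockExt_of_ne {i j : ι} (h : j ≠ i) (v : d i → ℝ) :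
    blockRes j (blockExt i v) = 0 := by
  ext x; simp [blockExt_apply_of_ne h]

theorem blockExt_injective (i : ι) : Function.Injective (blockExt (d := d) i) :=
  Function.LeftInverse.injective (blockRes_blockExt_self i)

theorem blockExt_blockRes {i : ι} {b : (Σ j, d j) → ℝ} (h : ∀ p : Σ j, d j, p.1 ≠ i → b p = 0) :
    blockExt i (blockRes i b) = b := by
  ext ⟨j, x⟩
  by_cases hj : j = i
  · subst hj; simp
  · rw [blockExt_apply_of_ne hj, h ⟨j, x⟩ hj]

theorem vecMulVec_blockExt (i : ι) (v : d i → ℝ) :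
    vecMulVec (blockExt i v) (blockExt i v) = blockDiagonal' (Pi.single i (vecMulVec v v)) := by
  ext ⟨j, x⟩ ⟨k, y⟩
  by_cases hj : j = i
  · subst hj
    by_cases hk : k = j
    · subst hk; simp [vecMulVec_apply]
    · simp [vecMulVec_apply, blockExt_apply_of_ne hk, blockDiagonal'_apply_ne _ _ _ (Ne.symm hk)]
  · simp [vecMulVec_apply, blockExt_apply_of_ne hj, blockDiagonal'_apply, hj]

theorem linearIndependent_blockExt_pair_iff {i : ι} {v w : d i → ℝ} :
    LinearIndependent ℝ ![blockExt i v, blockExt i w] ↔ LinearIndependent ℝ ![v, w] := by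
  have hcomp : ![blockExt i v, blockExt i w] = blockExt i ∘ ![v, w] := by
    ext k : 1; fin_cases k <;> rfl
  rw [hcomp, LinearMap.linearIndependent_iff _ (LinearMap.ker_eq_bot.2 (blockExt_injective i))]

theorem linearIndependent_blockExt_pair_of_ne {i j : ι} (hij : i ≠ j) {v : d i → ℝ}
    {w : d j → ℝ} (hv : v ≠ 0) (hw : w ≠ 0) :
    LinearIndependent ℝ ![blockExt i v, blockExt j w] := by
  refine LinearIndependent.pair_iff.2 fun s t hst => ⟨?_, ?_⟩
  · have := congr_arg (blockRes i) hst
    simpa [blockRes_blockExt_of_ne hij, hv] using this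
  · have := congr_arg (blockRes j) hst
    simpa [blockRes_blockExt_of_ne hij.symm, hw] using this

end Blocks

section BlockDiagonal

variable {ι : Type} [Fintype ι] [DecidableEq ι] {d : ι → Type}

def blockJoin (F : ∀ i, Multiset (d i → ℝ)) : Multiset ((Σ i, d i) → ℝ) :=
  ∑ i, (F i).map (blockExt i)

theorem sum_map_vecMulVec_blockJoin (F : ∀ i, Multiset (d i → ℝ)) :
    ((blockJoin F).map fun b => vecMulVec b b).sum =
      blockDiagonal' fun i => ((F i).map fun v => vecMulVec v v).sum := by
  have hblock : ∀ i, (((F i).map (blockExt i)).map fun b => vecMulVec b b).sum =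
      blockDiagonal' (Pi.single i ((F i).map fun v => vecMulVec v v).sum) := by
    intro i
    rw [Multiset.map_map]
    simp only [Function.comp_def, vecMulVec_blockExt]
    have := map_multiset_sum ((blockDiagonal'AddMonoidHom d d ℝ).comp (AddMonoidHom.single _ i))
      ((F i).map fun v => vecMulVec v v)
    rw [Multiset.map_map] at this
    exact this.symm
  rw [blockJoin, ← Multiset.coe_mapAddMonoidHom, map_sum, ← Multiset.coe_sumAddMonoidHom, map_sum]
  simp only [Multiset.coe_mapAddMonoidHom, Multiset.coe_sumAddMonoidHom, hblock]
  conv_rhs => rw [← Finset.univ_sum_single fun i => ((F i).map fun v => vecMulVec v v).sum]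
  exact (map_sum (blockDiagonal'AddMonoidHom d d ℝ) _ _).symm

variable [∀ i, Fintype (d i)]

noncomputable def blockSplit (L : Multiset ((Σ i, d i) → ℝ)) (i : ι) : Multiset (d i → ℝ) :=
  (L.filter fun b => blockRes i b ≠ 0).map (blockRes i)

theorem blockSplit_blockJoin {F : ∀ i, Multiset (d i → ℝ)} (hF : ∀ i, ∀ v ∈ F i, v ≠ 0) :
    blockSplit (blockJoin F) = F := by
  funext i
  rw [blockSplit, blockJoin, Multiset.filter_finset_sum, Finset.sum_eq_single i]
  · simp [Multiset.filter_map, Multiset.filter_eq_self.2 (hF i)]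
  · intro j _ hj
    rw [Multiset.filter_eq_nil.2 fun b hb => ?_]
    obtain ⟨v, -, rfl⟩ := Multiset.mem_map.1 hb
    exact not_not.2 (blockRes_blockExt_of_ne (Ne.symm hj) v)
  · simp

variable [∀ i, DecidableEq (d i)] {Ai : ∀ i, Matrix (d i) (d i) ℝ}

theorem IsCPRepG.blockExt_blockRes_of_mem {L : Multiset ((Σ i, d i) → ℝ)}
    (hL : IsCPRepG (blockDiagonal' Ai) L) {b : (Σ i, d i) → ℝ} (hb : b ∈ L) {i : ι}
    (hi : blockRes i b ≠ 0) : blockExt i (blockRes i b) = b := by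
  obtain ⟨x, hx⟩ := Function.ne_iff.1 hi
  refine blockExt_blockRes fun q hq => ?_
  have := hL.mul_eq_zero_of_apply_eq_zero (blockDiagonal'_apply_ne Ai x q.2 (Ne.symm hq)) hb
  exact (mul_eq_zero.1 this).resolve_left hx

theorem IsCPRepG.existsUnique_blockRes_ne_zero {L : Multiset ((Σ i, d i) → ℝ)}
    (hL : IsCPRepG (blockDiagonal' Ai) L) {b : (Σ i, d i) → ℝ} (hb : b ∈ L) :
    ∃! i, blockRes i b ≠ 0 := by
  obtain ⟨⟨i, x⟩, hx⟩ := Function.ne_iff.1 (hL.2.1 b hb)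
  refine ⟨i, fun h => hx (congr_fun h x), fun j hj => ?_⟩
  by_contra hji
  rw [← hL.blockExt_blockRes_of_mem hb hj] at hx
  exact hx (blockExt_apply_of_ne (Ne.symm hji) _ x)

theorem IsCPRepG.blockJoin_blockSplit {L : Multiset ((Σ i, d i) → ℝ)}
    (hL : IsCPRepG (blockDiagonal' Ai) L) : blockJoin (blockSplit L) = L := by
  have hblock : ∀ i, (blockSplit L i).map (blockExt i) = L.filter fun b => blockRes i b ≠ 0 := by
    intro i
    rw [blockSplit, Multiset.map_map]
    conv_rhs => rw [← Multiset.map_id' (L.filter _)]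
    exact Multiset.map_congr rfl fun b hb =>
      hL.blockExt_blockRes_of_mem (Multiset.mem_filter.1 hb).1 (Multiset.mem_filter.1 hb).2
  simp only [blockJoin, hblock]
  exact Multiset.sum_filter_of_existsUnique _ fun b hb => hL.existsUnique_blockRes_ne_zero hb

theorem isCPRepG_blockJoin {F : ∀ i, Multiset (d i → ℝ)} (hF : ∀ i, IsCPRepG (Ai i) (F i)) :
    IsCPRepG (blockDiagonal' Ai) (blockJoin F) := by
  have hmem : ∀ b ∈ blockJoin F, ∃ i, ∃ v ∈ F i, blockExt i v = b := by
    intro b hb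
    obtain ⟨i, -, hbi⟩ := Multiset.mem_sum.1 hb
    obtain ⟨v, hv, rfl⟩ := Multiset.mem_map.1 hbi
    exact ⟨i, v, hv, rfl⟩
  refine ⟨?_, ?_, ?_, ?_⟩
  · rintro b hb ⟨j, x⟩
    obtain ⟨i, v, hv, rfl⟩ := hmem b hb
    by_cases hj : j = i
    · subst hj; simpa using (hF j).1 v hv x
    · rw [blockExt_apply_of_ne hj]
  · intro b hb h0
    obtain ⟨i, v, hv, rfl⟩ := hmem b hb
    exact (hF i).2.1 v hv (blockExt_injective i (h0.trans (map_zero _).symm))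
  · refine Multiset.pairwise_finset_sum _ (fun i _ => (hF i).2.2.1.map
      fun v _ w _ h => linearIndependent_blockExt_pair_iff.2 h) ?_
    intro i _ j _ hij a ha b hb
    obtain ⟨v, hv, rfl⟩ := Multiset.mem_map.1 ha
    obtain ⟨w, hw, rfl⟩ := Multiset.mem_map.1 hb
    exact linearIndependent_blockExt_pair_of_ne hij ((hF i).2.1 v hv) ((hF j).2.1 w hw)
  · rw [sum_map_vecMulVec_blockJoin]
    exact blockDiagonal'_inj.2 (funext fun i => (hF i).2.2.2)

theorem IsCPRepG.isCPRepG_blockSplit {L : Multiset ((Σ i, d i) → ℝ)}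
    (hL : IsCPRepG (blockDiagonal' Ai) L) (i : ι) : IsCPRepG (Ai i) (blockSplit L i) := by
  refine ⟨?_, ?_, ?_, ?_⟩
  · intro v hv x
    obtain ⟨b, hb, rfl⟩ := Multiset.mem_map.1 hv
    exact hL.1 b (Multiset.mem_filter.1 hb).1 ⟨i, x⟩
  · intro v hv
    obtain ⟨b, hb, rfl⟩ := Multiset.mem_map.1 hv
    exact (Multiset.mem_filter.1 hb).2
  · refine (hL.2.2.1.filter _).map fun b hb c hc h => ?_
    rw [← linearIndependent_blockExt_pair_iff,
      hL.blockExt_blockRes_of_mem (Multiset.mem_filter.1 hb).1 (Multiset.mem_filter.1 hb).2,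
      hL.blockExt_blockRes_of_mem (Multiset.mem_filter.1 hc).1 (Multiset.mem_filter.1 hc).2]
    exact h
  · have h : blockDiagonal' (fun i => ((blockSplit L i).map fun v => vecMulVec v v).sum) =
        blockDiagonal' Ai := by
      rw [← sum_map_vecMulVec_blockJoin, hL.blockJoin_blockSplit]
      exact hL.2.2.2
    exact congr_fun (blockDiagonal'_injective h) i

theorem bijOn_blockJoin :
    Set.BijOn blockJoin (Set.univ.pi fun i => {F | IsCPRepG (Ai i) F})
      {L | IsCPRepG (blockDiagonal' Ai) L} :=
  Set.InvOn.bijOn (f' := blockSplit)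
    ⟨fun _ hF => blockSplit_blockJoin fun i => (hF i (Set.mem_univ i)).2.1,
      fun _ hL => IsCPRepG.blockJoin_blockSplit hL⟩
    (fun _ hF => isCPRepG_blockJoin fun i => hF i (Set.mem_univ i))
    (fun _ hL i _ => IsCPRepG.isCPRepG_blockSplit hL i)

end BlockDiagonal

theorem stmt_0_general (m : ℕ) (d : Fin m → ℕ) (Ai : ∀ i, Matrix (Fin (d i)) (Fin (d i)) ℝ)
    (A : Matrix (Σ i, Fin (d i)) (Σ i, Fin (d i)) ℝ)
    (hA : A = Matrix.blockDiagonal' Ai)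
    (k : Fin m → ℕ)
    (hk : ∀ i, {L | IsCPRepG (Ai i) L}.ncard = k i) :
    {L | IsCPRepG A L}.ncard = ∏ i, k i := by
  subst hA
  rw [← bijOn_blockJoin.ncard_eq, Set.ncard_univ_pi]
  exact Finset.prod_congr rfl fun i _ => hk i

/-- If `A = A₁ ⊕ ⋯ ⊕ A_m` and each `A_i` has exactly `k i` CP factorizations
(finitely many), then `A` has exactly `∏ i, k i` CP factorizations. -/
theorem stmt_0 (m : ℕ) (d : Fin m → ℕ) (Ai : ∀ i, Matrix (Fin (d i)) (Fin (d i)) ℝ)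
    (A : Matrix (Σ i, Fin (d i)) (Σ i, Fin (d i)) ℝ)
    (hA : A = Matrix.blockDiagonal' Ai)
    (hCP : ∃ L, IsCPRepG A L)
    (k : Fin m → ℕ)
    (hfin : ∀ i, {L | IsCPRepG (Ai i) L}.Finite)
    (hk : ∀ i, {L | IsCPRepG (Ai i) L}.ncard = k i) :
    {L | IsCPRepG A L}.ncard = ∏ i, k i :=
  stmt_0_general m d Ai A hA k hk
end

section
/- Let b₁, b₂ ∈ ℝⁿ₊ be linearly independent nonnegative vectors with supp(b₁) ⊇ supp(b₂). Then the matrix A = b₁b₁^T + b₂b₂^T has infinitely many CP representations as a sum of two rank-one matrices c₁c₁^T + c₂c₂^T with c₁, c₂ ≥ 0. -/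
open Matrix

/-! If `c² + s² = 1`, then `v = c b₁ - s b₂` and `w = s b₁ + c b₂` satisfy
`v vᵀ + w wᵀ = b₁ b₁ᵀ + b₂ b₂ᵀ` and are again linearly independent. For the angle `arctan t`,
`v` is a positive multiple of `b₁ - t b₂`, which stays nonnegative for all small `t > 0` precisely
because `supp b₂ ⊆ supp b₁`, and different `t ≥ 0` give different pairs `{v, w}`. -/

open Filter Topology Real

theorem vecMulVec_rotate_add {R ι : Type*} [CommRing R] (x y : ι → R) {c s : R}
    (h : c ^ 2 + s ^ 2 = 1) :
    vecMulVec (c • x - s • y) (c • x - s • y) + vecMulVec (s • x + c • y) (s • x + c • y) =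
      vecMulVec x x + vecMulVec y y := by
  ext i j
  simp only [Matrix.add_apply, vecMulVec_apply, Pi.sub_apply, Pi.add_apply, Pi.smul_apply,
    smul_eq_mul]
  linear_combination (x i * x j + y i * y j) * h

theorem LinearIndependent.pair_rotate {K V : Type*} [Field K] [AddCommGroup V] [Module K V]
    {x y : V} (h : LinearIndependent K ![x, y]) {c s : K} (hcs : c ^ 2 + s ^ 2 = 1) :
    LinearIndependent K ![c • x - s • y, s • x + c • y] := by
  simpa [sub_eq_add_neg] using
    (LinearIndependent.pair_add_smul_add_smul_iff c (-s) s c).2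
      ⟨h, fun h' => one_ne_zero (by linear_combination h' - hcs)⟩

theorem isCPRep_pair {n : ℕ} {A : Matrix (Fin n) (Fin n) ℝ} {v w : Fin n → ℝ}
    (hv : 0 ≤ v) (hw : 0 ≤ w) (hvw : LinearIndependent ℝ ![v, w])
    (hA : vecMulVec v v + vecMulVec w w = A) : IsCPRep A {v, w} := by
  refine ⟨?_, ?_, ⟨[v, w], rfl, by simp [hvw]⟩, by simpa using hA⟩
  · simpa using ⟨hv, hw⟩
  · simpa using ⟨hvw.ne_zero 0, hvw.ne_zero 1⟩

theorem eventually_smul_le_of_support_subset {ι : Type*} [Finite ι] {f g : ι → ℝ} (hf : 0 ≤ f)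
    (hsupp : ∀ i, g i ≠ 0 → f i ≠ 0) : ∀ᶠ t in 𝓝 (0 : ℝ), t • g ≤ f := by
  simp only [Pi.le_def, Pi.smul_apply, smul_eq_mul, eventually_all]
  intro i
  rcases (show 0 ≤ f i from hf i).eq_or_lt with hfi | hfi
  · simp [not_imp_not.1 (hsupp i) hfi.symm, ← hfi]
  · exact ((continuous_id.mul continuous_const).continuousAt.eventually_lt continuousAt_const
      (by simpa using hfi)).mono fun t ht => ht.le

noncomputable def rotatedPair {E : Type*} [AddCommGroup E] [Module ℝ E] (x y : E) (θ : ℝ) :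
    Multiset E :=
  {cos θ • x - sin θ • y, sin θ • x + cos θ • y}

theorem injOn_rotatedPair_arctan {E : Type*} [AddCommGroup E] [Module ℝ E] {x y : E}
    (h : LinearIndependent ℝ ![x, y]) :
    Set.InjOn (fun t => rotatedPair x y (arctan t)) (Set.Ici 0) := by
  intro t ht u _ htu
  have hmem : cos (arctan t) • x - sin (arctan t) • y ∈ rotatedPair x y (arctan u) := by
    rw [← show rotatedPair x y (arctan t) = rotatedPair x y (arctan u) from htu]
    simp [rotatedPair]
  simp only [rotatedPair, Multiset.insert_eq_cons, Multiset.mem_cons, Multiset.mem_singleton,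
    sub_eq_add_neg, ← neg_smul] at hmem
  rcases hmem with hsame | hcross
  · exact sin_arctan_strictMono.injective (by simpa using (h.eq_of_pair hsame).2)
  · have hneg_sin_eq_cos := (h.eq_of_pair hcross).2
    linarith [sin_arctan_nonneg.2 ht, cos_arctan_pos u]

/-- If `b₁, b₂ ≥ 0` are linearly independent with `supp b₁ ⊇ supp b₂`, then
`A = b₁b₁ᵀ + b₂b₂ᵀ` has infinitely many CP representations with two rank-one summands. -/
theorem stmt_2 (n : ℕ) (b₁ b₂ : Fin n → ℝ)
    (h₁ : ∀ i, 0 ≤ b₁ i) (h₂ : ∀ i, 0 ≤ b₂ i)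
    (hli : LinearIndependent ℝ ![b₁, b₂])
    (hsupp : ∀ i, b₂ i ≠ 0 → b₁ i ≠ 0) :
    {L : Multiset (Fin n → ℝ) |
      IsCPRep (vecMulVec b₁ b₁ + vecMulVec b₂ b₂) L ∧ Multiset.card L = 2}.Infinite := by
  have hsmall : {t : ℝ | 0 < t ∧ t • b₂ ≤ b₁} ∈ 𝓝[>] 0 :=
    inter_mem self_mem_nhdsWithin
      (nhdsWithin_le_nhds (eventually_smul_le_of_support_subset h₁ hsupp))
  obtain ⟨ε, hε, hsub⟩ := mem_nhdsGT_iff_exists_Ioo_subset.1 hsmall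
  refine Set.infinite_of_injOn_mapsTo ((injOn_rotatedPair_arctan hli).mono fun t ht => ht.1.le)
    (fun t ht => ?_) ((Set.Ioo_infinite hε).mono hsub)
  obtain ⟨ht, hle⟩ := ht
  have hcos := cos_arctan_pos t
  have hsin : sin (arctan t) = t * cos (arctan t) := by rw [← tan_mul_cos hcos.ne', tan_arctan]
  have hcs := cos_sq_add_sin_sq (arctan t)
  refine ⟨isCPRep_pair ?_ ?_ (hli.pair_rotate hcs) (vecMulVec_rotate_add _ _ hcs), rfl⟩
  · rw [hsin, mul_comm, mul_smul, ← smul_sub]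
    exact smul_nonneg hcos.le (sub_nonneg.2 hle)
  · exact add_nonneg (smul_nonneg (sin_arctan_nonneg.2 ht.le) h₁) (smul_nonneg hcos.le h₂)
end

section
/- Every matrix in the interior of the cone CP_n of n×n completely positive matrices, with n ≥ 2, has infinitely many CP factorizations. -/
open Matrix

/-!
For a nonnegative direction `v` and small `t > 0`, the symmetric matrix `A - t v vᵀ` stays in
the neighbourhood of `A` inside `CP_n`, so it has a CP factorization. Adding the column `√t v`
back (or merging it into a column parallel to it) gives a CP factorization of `A` that contains a
positive multiple of `v`. Applied to the pairwise non-parallel directions `eᵢ + k eⱼ`, `k ∈ ℕ`,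
this produces infinitely many distinct columns, while finitely many factorizations have only
finitely many columns.
-/

theorem Multiset.pairwise_cons {α : Type*} {r : α → α → Prop} [Std.Symm r] {a : α}
    {s : Multiset α} : (a ::ₘ s).Pairwise r ↔ (∀ b ∈ s, r a b) ∧ s.Pairwise r := by
  induction s using Quotient.inductionOn with
  | h l => simp only [Multiset.quot_mk_to_coe, Multiset.cons_coe,
      Multiset.pairwise_coe_iff_pairwise, List.pairwise_cons, Multiset.mem_coe]

instance LinearIndependent.instSymmPair {R M : Type*} [Ring R] [AddCommGroup M] [Module R M] :
    Std.Symm (fun x y : M => LinearIndependent R ![x, y]) :=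
  ⟨fun _ _ => LinearIndependent.pair_symm_iff.mp⟩

theorem LinearIndependent.pair_smul_left_iff {K V : Type*} [Field K] [AddCommGroup V]
    [Module K V] {x y : V} {u : K} (hu : u ≠ 0) :
    LinearIndependent K ![u • x, y] ↔ LinearIndependent K ![x, y] := by
  simpa using LinearIndependent.pair_smul_smul_iff (x := x) (y := y) hu.isUnit isUnit_one

theorem Matrix.vecMulVec_smul_smul {m α : Type*} [CommSemiring α] (k : α) (v : m → α) :
    vecMulVec (k • v) (k • v) = k ^ 2 • vecMulVec v v := by
  rw [smul_vecMulVec, vecMulVec_smul, smul_smul, sq]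

section CPRep

variable {n : ℕ} {X : Matrix (Fin n) (Fin n) ℝ} {L : Multiset (Fin n → ℝ)} {v : Fin n → ℝ}

theorem isCPRep_cons_iff :
    IsCPRep X (v ::ₘ L) ↔ (∀ i, 0 ≤ v i) ∧ v ≠ 0 ∧ (∀ b ∈ L, LinearIndependent ℝ ![v, b]) ∧
      IsCPRep (X - vecMulVec v v) L := by
  simp only [IsCPRep, Multiset.mem_cons, forall_eq_or_imp, Multiset.pairwise_cons,
    Multiset.map_cons, Multiset.sum_cons, eq_sub_iff_add_eq']
  tauto

theorem IsCPRep.exists_add_vecMulVec (hL : IsCPRep X L) (hv0 : ∀ i, 0 ≤ v i) (hv : v ≠ 0) :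
    ∃ c : ℝ, 0 < c ∧ ∃ M, IsCPRep (vecMulVec v v + X) M ∧ c • v ∈ M := by
  by_cases hdep : ∃ b ∈ L, ¬ LinearIndependent ℝ ![v, b]
  · obtain ⟨b, hbL, hvb⟩ := hdep
    obtain ⟨a, rfl⟩ : ∃ a : ℝ, a • v = b := by
      simpa [LinearIndependent.pair_iff' hv] using hvb
    obtain ⟨L', rfl⟩ := Multiset.exists_cons_of_mem hbL
    obtain ⟨-, hav, hL'v, hL'⟩ := isCPRep_cons_iff.mp hL
    have ha : a ≠ 0 := left_ne_zero_of_smul hav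
    set k := √(a ^ 2 + 1)
    have hk : 0 < k := Real.sqrt_pos.mpr (by positivity)
    refine ⟨k, hk, (k • v) ::ₘ L', isCPRep_cons_iff.mpr ⟨fun i => ?_, ?_, fun c hc => ?_, ?_⟩,
      Multiset.mem_cons_self _ _⟩
    · exact mul_nonneg hk.le (hv0 i)
    · exact smul_ne_zero hk.ne' hv
    · rw [LinearIndependent.pair_smul_left_iff hk.ne']
      exact (LinearIndependent.pair_smul_left_iff ha).mp (hL'v c hc)
    · convert hL' using 1
      rw [vecMulVec_smul_smul, vecMulVec_smul_smul, Real.sq_sqrt (by positivity)]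
      module
  · push Not at hdep
    refine ⟨1, one_pos, v ::ₘ L, isCPRep_cons_iff.mpr ⟨hv0, hv, hdep, ?_⟩, ?_⟩
    · rwa [add_sub_cancel_left]
    · rw [one_smul]
      exact Multiset.mem_cons_self _ _

end CPRep

theorem Set.infinite_of_injective_forall_exists_mem {α ι : Type*} [Infinite ι]
    {S : Set (Multiset α)} {f : ι → α} (hf : Function.Injective f) (hfS : ∀ i, ∃ L ∈ S, f i ∈ L) :
    S.Infinite := fun hS =>
  Set.infinite_range_of_injective hf <| (hS.biUnion fun L _ => L.finite_toSet).subset <|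
    Set.range_subset_iff.2 fun i => let ⟨_, hL, hfL⟩ := hfS i; Set.mem_biUnion hL hfL

theorem exists_pos_forall_mul_lt {ι : Type*} [Finite ι] (v : ι → ℝ) {ε : ℝ} (hε : 0 < ε) :
    ∃ t : ℝ, 0 < t ∧ ∀ i j, t * (v i * v j) < ε := by
  have hsmall : ∀ c : ℝ, ∀ᶠ t in nhdsWithin (0 : ℝ) (Set.Ioi 0), t * c < ε := fun c =>
    ((continuous_id.mul continuous_const).tendsto' 0 0 (zero_mul c)).mono_left
      nhdsWithin_le_nhds |>.eventually (gt_mem_nhds hε)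
  exact (eventually_mem_nhdsWithin.and (Filter.eventually_all.2 fun i =>
    Filter.eventually_all.2 fun j => hsmall _)).exists

theorem exists_isCPRep_smul_mem {n : ℕ} {A : Matrix (Fin n) (Fin n) ℝ} (hAs : A.IsSymm) {ε : ℝ}
    (hε : 0 < ε) (hcp : ∀ X : Matrix (Fin n) (Fin n) ℝ,
      X.IsSymm → (∀ i j, |X i j - A i j| < ε) → IsCP X)
    {v : Fin n → ℝ} (hv0 : ∀ i, 0 ≤ v i) (hv : v ≠ 0) :
    ∃ c : ℝ, 0 < c ∧ ∃ M, IsCPRep A M ∧ c • v ∈ M := by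
  obtain ⟨t, ht, htε⟩ := exists_pos_forall_mul_lt v hε
  set w := √t • v
  have hww : vecMulVec w w = t • vecMulVec v v := by
    rw [vecMulVec_smul_smul, Real.sq_sqrt ht.le]
  obtain ⟨L, hL⟩ : IsCP (A - vecMulVec w w) := by
    refine hcp _ (hAs.sub (transpose_vecMulVec w w)) fun i j => ?_
    rw [Matrix.sub_apply, sub_sub_cancel_left, abs_neg, hww, Matrix.smul_apply, vecMulVec_apply,
      smul_eq_mul, abs_of_nonneg (by have := hv0 i; have := hv0 j; positivity)]
    exact htε i j
  obtain ⟨c, hc, M, hM, hcM⟩ :=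
    hL.exists_add_vecMulVec (v := w) (fun i => mul_nonneg (Real.sqrt_nonneg t) (hv0 i))
      (smul_ne_zero (Real.sqrt_pos.mpr ht).ne' hv)
  rw [add_sub_cancel] at hM
  exact ⟨c * √t, mul_pos hc (Real.sqrt_pos.mpr ht), M, hM, by rwa [mul_smul]⟩

/-- Every matrix in the interior of `CP_n` (taken inside the space of symmetric
matrices, with the entrywise sup metric) has infinitely many CP factorizations. -/
theorem stmt_3 (n : ℕ) (hn : 2 ≤ n) (A : Matrix (Fin n) (Fin n) ℝ) (hAs : A.IsSymm)
    (hint : ∃ ε > (0 : ℝ), ∀ X : Matrix (Fin n) (Fin n) ℝ,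
      X.IsSymm → (∀ i j, |X i j - A i j| < ε) → IsCP X) :
    {L | IsCPRep A L}.Infinite := by
  obtain ⟨ε, hε, hcp⟩ := hint
  let i : Fin n := ⟨0, by omega⟩
  let j : Fin n := ⟨1, by omega⟩
  have hij : i ≠ j := by simp [i, j, Fin.ext_iff]
  let v (k : ℕ) : Fin n → ℝ := Pi.single i 1 + Pi.single j (k : ℝ)
  have hvi (k : ℕ) : v k i = 1 := by simp [v, hij]
  have hvj (k : ℕ) : v k j = k := by simp [v, hij.symm]
  have hv0 (k : ℕ) : 0 ≤ v k :=
    add_nonneg (Pi.single_nonneg.2 zero_le_one) (Pi.single_nonneg.2 k.cast_nonneg)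
  have hv (k : ℕ) : v k ≠ 0 := fun h => by simpa [h] using hvi k
  choose c hc hcv using fun k => exists_isCPRep_smul_mem hAs hε hcp (hv0 k) (hv k)
  refine Set.infinite_of_injective_forall_exists_mem (f := fun k => c k • v k)
    (fun k l hkl => ?_) hcv
  have hci : c k = c l := by simpa [hvi] using congrFun hkl i
  have hcj := congrFun hkl j
  simp only [Pi.smul_apply, hvj, smul_eq_mul, hci] at hcj
  exact_mod_cast mul_left_cancel₀ (hc l).ne' hcj
end

section
/- Let A be an n×n nonsingular completely positive matrix (n ≥ 2) whose graph is a tree. Then A has infinitely many minimal CP factorizations. -/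
/-! Start from a minimal CP factorization `A = ∑ b bᵀ`. The support of each column is a clique of
`G(A)`, hence a vertex or an edge of the tree. There are at least `rank A = n` columns but only
`n - 1` edges, so some column `c` has its support inside that of another column `b`: either two
columns sit on the same edge, or a column sits on a single vertex `i` and lies inside the column
covering an edge at `i`. The rotation `(b, c) ↦ (cos t • b + sin t • c, cos t • c - sin t • b)`
preserves `b bᵀ + c cᵀ`; for small `t < 0` both new columns stay nonnegative because
`supp c ⊆ supp b`, and all but finitely many `t` keep the columns pairwise independent.
Different `t` give different factorizations with the same number of columns. -/

open Matrix

open Real Set Filter Topology Function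

section PairIndependence

variable {K V : Type*} [Field K] [AddCommGroup V] [Module K V]

theorem LinearIndependent.pair_swap {x y : V} (h : LinearIndependent K ![x, y]) :
    LinearIndependent K ![y, x] := by
  convert h.comp (Equiv.swap 0 1) (Equiv.injective _) using 1
  ext i
  fin_cases i <;> rfl

theorem not_linearIndependent_pair_self (x : V) : ¬ LinearIndependent K ![x, x] :=
  fun h => zero_ne_one (h.injective rfl)

theorem not_linearIndependent_pair_of_not_linearIndependent {d x y : V} (hd : d ≠ 0)
    (hx : ¬ LinearIndependent K ![d, x]) (hy : ¬ LinearIndependent K ![d, y]) :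
    ¬ LinearIndependent K ![x, y] := by
  intro hxy
  simp only [LinearIndependent.pair_iff' hd, not_forall, not_not] at hx hy
  obtain ⟨a, rfl⟩ := hx
  obtain ⟨a', rfl⟩ := hy
  have ha := (LinearIndependent.pair_iff.mp hxy a' (-a) (by module)).2
  exact hxy.ne_zero 0 (by simp [neg_eq_zero.mp ha])

theorem LinearIndependent.pair_neg_swap {x y : V} (h : LinearIndependent K ![x, y]) :
    LinearIndependent K ![y, -x] := by
  rw [LinearIndependent.pair_iff] at h ⊢
  intro s t hst
  obtain ⟨ht, hs⟩ := h (-t) s (by rw [← hst]; module)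
  exact ⟨hs, neg_eq_zero.mp ht⟩

instance : Std.Symm (fun x y : V => LinearIndependent K ![x, y]) :=
  ⟨fun _ _ => LinearIndependent.pair_swap⟩

theorem Multiset.pairwise_linearIndependent_cons {a : V} {s : Multiset V} :
    (a ::ₘ s).Pairwise (fun x y => LinearIndependent K ![x, y]) ↔
      (∀ x ∈ s, LinearIndependent K ![a, x]) ∧
        s.Pairwise (fun x y => LinearIndependent K ![x, y]) := by
  induction s using Quot.inductionOn
  simp [Multiset.pairwise_coe_iff_pairwise]

theorem Multiset.Pairwise.nodup_of_linearIndependent {s : Multiset V}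
    (hs : s.Pairwise (fun x y => LinearIndependent K ![x, y])) : s.Nodup := by
  induction s using Quot.inductionOn with | h l =>
  exact Multiset.coe_nodup.mpr <| (Multiset.pairwise_coe_iff_pairwise.mp hs).imp
    fun {x y} h (hxy : x = y) => not_linearIndependent_pair_self y (hxy ▸ h)

end PairIndependence

section Rotation

variable {V : Type*} [AddCommGroup V] [Module ℝ V]

noncomputable def rotComb (b c : V) (t : ℝ) : V := cos t • b + sin t • c

theorem rotComb_add_pi_div_two (b c : V) (t : ℝ) :
    rotComb b c (t + π / 2) = rotComb c (-b) t := by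
  simp only [rotComb, cos_add_pi_div_two, sin_add_pi_div_two]
  module

theorem linearIndependent_rotComb_of_sin_ne_zero {b c : V} (h : LinearIndependent ℝ ![b, c])
    {s t : ℝ} (hst : sin (t - s) ≠ 0) :
    LinearIndependent ℝ ![rotComb b c s, rotComb b c t] := by
  rw [LinearIndependent.pair_iff] at h ⊢
  intro α β hαβ
  obtain ⟨h1, h2⟩ := h (α * cos s + β * cos t) (α * sin s + β * sin t) <| by
    rw [← hαβ]; simp only [rotComb]; module
  rw [sin_sub] at hst
  constructor
  · apply mul_left_cancel₀ hst
    linear_combination sin t * h1 - cos t * h2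
  · apply mul_left_cancel₀ hst
    linear_combination cos s * h2 - sin s * h1

theorem linearIndependent_rotComb {b c : V} (h : LinearIndependent ℝ ![b, c]) {s t : ℝ}
    (hst : s ≠ t) (hlt : |t - s| < π) :
    LinearIndependent ℝ ![rotComb b c s, rotComb b c t] := by
  refine linearIndependent_rotComb_of_sin_ne_zero h fun h0 => hst ?_
  rw [abs_lt] at hlt
  exact (sub_eq_zero.mp ((sin_eq_zero_iff_of_lt_of_lt hlt.1 hlt.2).mp h0)).symm

theorem rotComb_ne_zero {b c : V} (h : LinearIndependent ℝ ![b, c]) (t : ℝ) :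
    rotComb b c t ≠ 0 :=
  (linearIndependent_rotComb_of_sin_ne_zero h (s := t) (t := t + π / 2) (by simp)).ne_zero 0

theorem eventually_linearIndependent_rotComb {b c d : V} (h : LinearIndependent ℝ ![b, c])
    (hd : d ≠ 0) (a : ℝ) : ∀ᶠ t in 𝓝[≠] a, LinearIndependent ℝ ![d, rotComb b c t] := by
  -- parameters less than `π` apart give non-parallel vectors, so at most one is parallel to `d`
  have hbad : {t ∈ Ioo (a - π / 2) (a + π / 2) |
      ¬ LinearIndependent ℝ ![d, rotComb b c t]}.Subsingleton := by
    rintro s ⟨hs, hsd⟩ t ⟨ht, htd⟩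
    by_contra hst
    refine not_linearIndependent_pair_of_not_linearIndependent hd hsd htd
      (linearIndependent_rotComb h hst ?_)
    rw [abs_sub_lt_iff]
    constructor <;> linarith [hs.1, hs.2, ht.1, ht.2]
  filter_upwards [nhdsWithin_le_nhds (Ioo_mem_nhds (show a - π / 2 < a by linarith [pi_pos])
    (show a < a + π / 2 by linarith [pi_pos])),
    nhdsNE_le_cofinite a hbad.finite.eventually_cofinite_notMem] with t ht htbad
  by_contra htd
  exact htbad ⟨ht, htd⟩

end Rotation

section NonnegRotation

variable {ι : Type*} {b c : ι → ℝ}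

theorem vecMulVec_rotComb_add (b c : ι → ℝ) (t : ℝ) :
    vecMulVec (rotComb b c t) (rotComb b c t) + vecMulVec (rotComb c (-b) t) (rotComb c (-b) t) =
      vecMulVec b b + vecMulVec c c := by
  ext i j
  simp only [Matrix.add_apply, vecMulVec_apply, rotComb, Pi.add_apply, Pi.smul_apply,
    Pi.neg_apply, smul_eq_mul]
  linear_combination (b i * b j + c i * c j) * sin_sq_add_cos_sq t

theorem eventually_nonneg_rotComb [Finite ι] (hb : 0 ≤ b) (hcb : support c ⊆ support b) :
    ∀ᶠ t in 𝓝 0, 0 ≤ rotComb b c t := by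
  simp only [Pi.le_def, Filter.eventually_all]
  intro i
  rcases (hb i).eq_or_lt with hbi | hbi
  · have hci : c i = 0 := notMem_support.mp fun hc => hcb hc hbi.symm
    simp [rotComb, ← hbi, hci]
  · have hcont : Continuous fun t => rotComb b c t i := by simp only [rotComb]; fun_prop
    exact (continuousAt_const.eventually_lt hcont.continuousAt (by simpa [rotComb] using hbi)).mono
      fun _ => le_of_lt

theorem rotComb_neg_nonneg (hb : 0 ≤ b) (hc : 0 ≤ c) {t : ℝ} (ht : t ∈ Icc (-(π / 2)) 0) :
    0 ≤ rotComb c (-b) t := by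
  intro i
  have hcos : 0 ≤ cos t := cos_nonneg_of_mem_Icc ⟨ht.1, by linarith [ht.2, pi_pos]⟩
  have hsin : sin t ≤ 0 := sin_nonpos_of_nonpos_of_neg_pi_le ht.2 (by linarith [ht.1, pi_pos])
  have hbi : 0 ≤ b i := hb i
  have hci : 0 ≤ c i := hc i
  simp only [rotComb, Pi.add_apply, Pi.smul_apply, Pi.neg_apply, Pi.zero_apply, smul_eq_mul]
  linarith [mul_nonneg hcos hci, mul_nonneg (neg_nonneg.mpr hsin) hbi]

end NonnegRotation

theorem Multiset.exists_eq_cons_cons {α : Type*} {s : Multiset α} {a b : α} (ha : a ∈ s)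
    (hb : b ∈ s) (hab : a ≠ b) : ∃ t, s = a ::ₘ b ::ₘ t := by
  obtain ⟨s', rfl⟩ := Multiset.exists_cons_of_mem ha
  obtain ⟨t, rfl⟩ :=
    Multiset.exists_cons_of_mem ((Multiset.mem_cons.mp hb).resolve_left hab.symm)
  exact ⟨t, rfl⟩

theorem Matrix.rank_add_le {m n K : Type*} [Fintype m] [Fintype n] [Field K]
    (A B : Matrix m n K) : (A + B).rank ≤ A.rank + B.rank := by
  rw [rank, rank, rank, mulVecLin_add]
  exact (Submodule.finrank_mono (LinearMap.range_add_le _ _)).trans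
    (Submodule.finrank_add_le_finrank_add_finrank _ _)

theorem Matrix.rank_sum_vecMulVec_le {n K : Type*} [Fintype n] [Field K] (L : Multiset (n → K)) :
    (L.map fun b => vecMulVec b b).sum.rank ≤ Multiset.card L := by
  induction L using Multiset.induction_on with
  | empty => simp
  | cons b L ih =>
    rw [Multiset.map_cons, Multiset.sum_cons, Multiset.card_cons]
    have := rank_vecMulVec_le b b
    exact (rank_add_le _ _).trans (by omega)

theorem SimpleGraph.IsClique.ncard_le_two {α : Type*} [Finite α] {G : SimpleGraph α}
    (hG : G.CliqueFree 3) {s : Set α} (hs : G.IsClique s) : s.ncard ≤ 2 := by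
  classical
  by_contra! h
  obtain ⟨a, b, c, ha, hb, hc, hab, hac, hbc⟩ := (Set.two_lt_ncard_iff).mp h
  exact hG {a, b, c} (is3Clique_triple_iff.mpr ⟨hs ha hb hab, hs ha hc hac, hs hb hc hbc⟩)

theorem IsCP.exists_isMinCPRep {n : ℕ} {A : Matrix (Fin n) (Fin n) ℝ} (h : IsCP A) :
    ∃ L, IsMinCPRep A L := by
  obtain ⟨L, hL⟩ := h
  exact Nat.sInf_mem
    (⟨_, L, hL, rfl⟩ : {k | ∃ L, IsCPRep A L ∧ Multiset.card L = k}.Nonempty)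

namespace IsCPRep

variable {n : ℕ} {A : Matrix (Fin n) (Fin n) ℝ} {L : Multiset (Fin n → ℝ)}

theorem nodup (hL : IsCPRep A L) : L.Nodup :=
  hL.2.2.1.nodup_of_linearIndependent

theorem apply_eq_sum (hL : IsCPRep A L) (i j : Fin n) :
    A i j = (L.map fun b => b i * b j).sum := by
  rw [← hL.2.2.2]
  exact (map_multiset_sum (entryAddMonoidHom ℝ i j) _).trans (by rw [Multiset.map_map]; rfl)

theorem mul_le_apply (hL : IsCPRep A L) {b : Fin n → ℝ} (hb : b ∈ L) (i j : Fin n) :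
    b i * b j ≤ A i j := by
  rw [hL.apply_eq_sum]
  refine Multiset.single_le_sum (fun y hy => ?_) _ (Multiset.mem_map_of_mem _ hb)
  obtain ⟨x, hx, rfl⟩ := Multiset.mem_map.mp hy
  exact mul_nonneg (hL.1 x hx i) (hL.1 x hx j)

theorem isClique_support (hL : IsCPRep A L) {b : Fin n → ℝ} (hb : b ∈ L) :
    (matGraph A).IsClique (support b) := by
  intro i hi j hj hij
  have hpos : 0 < b i * b j := mul_pos ((hL.1 b hb i).lt_of_ne' hi) ((hL.1 b hb j).lt_of_ne' hj)
  exact ⟨hij, Or.inl (hpos.trans_le (hL.mul_le_apply hb i j)).ne'⟩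

theorem exists_mem_ne_zero_of_adj (hL : IsCPRep A L) {i j : Fin n} (hij : (matGraph A).Adj i j) :
    ∃ b ∈ L, b i ≠ 0 ∧ b j ≠ 0 := by
  by_contra! h
  have hprod : ∀ b ∈ L, b i * b j = 0 := fun b hb => by
    by_cases hbi : b i = 0
    · simp [hbi]
    · simp [h b hb hbi]
  have hzero : ∀ k l, (∀ b ∈ L, b k * b l = 0) → A k l = 0 := fun k l h => by
    rw [hL.apply_eq_sum]
    refine Multiset.sum_eq_zero fun x hx => ?_
    obtain ⟨b, hb, rfl⟩ := Multiset.mem_map.mp hx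
    exact h b hb
  rcases hij.2 with hA | hA
  · exact hA (hzero i j hprod)
  · exact hA (hzero j i fun b hb => by rw [mul_comm]; exact hprod b hb)

theorem le_card_of_det_ne_zero (hL : IsCPRep A L) (hA : A.det ≠ 0) : n ≤ Multiset.card L := by
  have hrank : A.rank = n := by
    rw [rank_of_isUnit A ((isUnit_iff_isUnit_det A).mpr hA.isUnit), Fintype.card_fin]
  calc n = A.rank := hrank.symm
    _ ≤ Multiset.card L := hL.2.2.2 ▸ rank_sum_vecMulVec_le L

theorem exists_ne_support_subset_of_support_eq_singleton (hL : IsCPRep A L)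
    {x : Fin n → ℝ} (hx : x ∈ L) {i j : Fin n} (hxi : support x = {i})
    (hij : (matGraph A).Adj i j) :
    ∃ b ∈ L, ∃ c ∈ L, b ≠ c ∧ support c ⊆ support b := by
  obtain ⟨y, hy, hyi, hyj⟩ := hL.exists_mem_ne_zero_of_adj hij
  refine ⟨y, hy, x, hx, ?_, ?_⟩
  · rintro rfl
    have hj : j ∈ support y := hyj
    rw [hxi, Set.mem_singleton_iff] at hj
    exact hij.ne hj.symm
  · rw [hxi, Set.singleton_subset_iff]
    exact hyi

theorem exists_ne_support_eq_of_card_edgeFinset_lt (hL : IsCPRep A L)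
    [Fintype (matGraph A).edgeSet] (h2 : ∀ x ∈ L, (support x).ncard = 2)
    (hlt : (matGraph A).edgeFinset.card < Multiset.card L) :
    ∃ b ∈ L, ∃ c ∈ L, b ≠ c ∧ support b = support c := by
  classical
  have hmaps : ∀ x ∈ L.toFinset,
      support x ∈ (matGraph A).edgeFinset.image fun e => {v | v ∈ e} := by
    intro x hx
    rw [Multiset.mem_toFinset] at hx
    obtain ⟨i, j, hij, hsupp⟩ := Set.ncard_eq_two.mp (h2 x hx)
    refine Finset.mem_image.mpr ⟨s(i, j), ?_, by ext; simp [hsupp]⟩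
    rw [SimpleGraph.mem_edgeFinset, SimpleGraph.mem_edgeSet]
    exact hL.isClique_support hx (by simp [hsupp]) (by simp [hsupp]) hij
  have hcard : ((matGraph A).edgeFinset.image fun e => {v | v ∈ e}).card < L.toFinset.card := by
    rw [Multiset.toFinset_card_of_nodup hL.nodup]
    exact Finset.card_image_le.trans_lt hlt
  obtain ⟨b, hb, c, hc, hbc, hsupp⟩ :=
    Finset.exists_ne_map_eq_of_card_lt_of_maps_to hcard fun x hx => hmaps x hx
  exact ⟨b, Multiset.mem_toFinset.mp hb, c, Multiset.mem_toFinset.mp hc, hbc, hsupp⟩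

theorem exists_ne_support_subset_of_isTree (hL : IsCPRep A L) (hn : 2 ≤ n)
    (htree : (matGraph A).IsTree) (hcard : n ≤ Multiset.card L) :
    ∃ b ∈ L, ∃ c ∈ L, b ≠ c ∧ support c ⊆ support b := by
  classical
  have hle : ∀ x ∈ L, (support x).ncard ≤ 2 := fun x hx =>
    (hL.isClique_support hx).ncard_le_two (htree.isAcyclic.cliqueFree le_rfl)
  by_cases hsmall : ∃ x ∈ L, (support x).ncard ≤ 1
  · obtain ⟨x, hx, hx1⟩ := hsmall
    obtain ⟨i, hxi⟩ := ((Set.ncard_le_one_iff_eq).mp hx1).resolve_left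
      (support_eq_empty_iff.not.mpr (hL.2.1 x hx))
    have : Nontrivial (Fin n) := Fin.nontrivial_iff_two_le.mpr hn
    obtain ⟨j, hij⟩ := htree.connected.preconnected.exists_adj_of_nontrivial i
    exact hL.exists_ne_support_subset_of_support_eq_singleton hx hxi hij
  · push Not at hsmall
    have hlt : (matGraph A).edgeFinset.card < Multiset.card L := by
      have := htree.card_edgeFinset
      rw [Fintype.card_fin] at this
      omega
    obtain ⟨b, hb, c, hc, hbc, hsupp⟩ :=
      hL.exists_ne_support_eq_of_card_edgeFinset_lt
        (fun x hx => le_antisymm (hle x hx) (hsmall x hx)) hlt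
    exact ⟨b, hb, c, hc, hbc, hsupp.ge⟩

theorem rotate {b c : Fin n → ℝ} {M : Multiset (Fin n → ℝ)} (hL : IsCPRep A (b ::ₘ c ::ₘ M)) {t : ℝ}
    (hu : 0 ≤ rotComb b c t) (hv : 0 ≤ rotComb c (-b) t)
    (hM : ∀ d ∈ M, LinearIndependent ℝ ![d, rotComb b c t] ∧
      LinearIndependent ℝ ![d, rotComb c (-b) t]) :
    IsCPRep A (rotComb b c t ::ₘ rotComb c (-b) t ::ₘ M) := by
  obtain ⟨hnn, hnz, hpw, hsum⟩ := hL
  simp only [Multiset.pairwise_linearIndependent_cons, Multiset.forall_mem_cons] at hnn hnz hpw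
  have hbc : LinearIndependent ℝ ![b, c] := hpw.1.1
  refine ⟨?_, ?_, ?_, ?_⟩
  · simp only [Multiset.forall_mem_cons]
    exact ⟨hu, hv, hnn.2.2⟩
  · simp only [Multiset.forall_mem_cons]
    exact ⟨rotComb_ne_zero hbc t, rotComb_ne_zero hbc.pair_neg_swap t, hnz.2.2⟩
  · simp only [Multiset.pairwise_linearIndependent_cons, Multiset.forall_mem_cons]
    refine ⟨⟨?_, fun d hd => (hM d hd).1.pair_swap⟩, fun d hd => (hM d hd).2.pair_swap,
      hpw.2.2⟩
    rw [← rotComb_add_pi_div_two]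
    exact linearIndependent_rotComb_of_sin_ne_zero hbc (s := t) (t := t + π / 2) (by simp)
  · simp only [Multiset.map_cons, Multiset.sum_cons] at hsum ⊢
    rw [← add_assoc, vecMulVec_rotComb_add, add_assoc, hsum]

end IsCPRep

theorem injOn_rotComb_cons {V : Type*} [AddCommGroup V] [Module ℝ V] {b c : V}
    (h : LinearIndependent ℝ ![b, c]) (M : Multiset V) :
    InjOn (fun t => rotComb b c t ::ₘ rotComb c (-b) t ::ₘ M)
      {t ∈ Ioo (-(π / 2)) 0 | ∀ d ∈ M, LinearIndependent ℝ ![d, rotComb b c t]} := by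
  rintro t ⟨ht, htM⟩ t' ⟨ht', -⟩ heq
  have hmem : rotComb b c t ∈ rotComb b c t' ::ₘ rotComb c (-b) t' ::ₘ M := by
    simp only at heq
    rw [← heq]
    exact Multiset.mem_cons_self _ _
  rw [← rotComb_add_pi_div_two, Multiset.mem_cons, Multiset.mem_cons] at hmem
  rcases hmem with heq' | heq' | hM
  · by_contra hne
    have hind := linearIndependent_rotComb h hne <| by
      rw [abs_sub_lt_iff]; constructor <;> linarith [ht.1, ht.2, ht'.1, ht'.2]
    rw [heq'] at hind
    exact not_linearIndependent_pair_self _ hind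
  · have hne : t ≠ t' + π / 2 := (show t < t' + π / 2 by linarith [ht.2, ht'.1]).ne
    have hind := linearIndependent_rotComb h hne <| by
      rw [abs_sub_lt_iff]; constructor <;> linarith [ht.1, ht.2, ht'.1, ht'.2]
    rw [heq'] at hind
    exact absurd hind (not_linearIndependent_pair_self _)
  · exact absurd (htM _ hM) (not_linearIndependent_pair_self _)

theorem IsMinCPRep.infinite_setOf_of_support_subset {n : ℕ} {A : Matrix (Fin n) (Fin n) ℝ}
    {b c : Fin n → ℝ} {M : Multiset (Fin n → ℝ)} (hL : IsMinCPRep A (b ::ₘ c ::ₘ M))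
    (hcb : support c ⊆ support b) : {L | IsMinCPRep A L}.Infinite := by
  have hb : 0 ≤ b := hL.1.1 b (by simp)
  have hc : 0 ≤ c := hL.1.1 c (by simp)
  have hMnz : ∀ d ∈ M, d ≠ 0 := fun d hd => hL.1.2.1 d (by simp [hd])
  have hbc : LinearIndependent ℝ ![b, c] := by
    have hpw := hL.1.2.2.1
    simp only [Multiset.pairwise_linearIndependent_cons, Multiset.forall_mem_cons] at hpw
    exact hpw.1.1
  have hgood : ∀ᶠ t in 𝓝[<] 0, t ∈ Ioo (-(π / 2)) 0 ∧ 0 ≤ rotComb b c t ∧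
      ∀ d ∈ M, LinearIndependent ℝ ![d, rotComb b c t] ∧
        LinearIndependent ℝ ![d, rotComb c (-b) t] := by
    have hind : ∀ᶠ t in 𝓝[<] 0, ∀ d ∈ M.toFinset,
        LinearIndependent ℝ ![d, rotComb b c t] ∧ LinearIndependent ℝ ![d, rotComb c (-b) t] := by
      refine (eventually_all_finset _).2 fun d hd => nhdsLT_le_nhdsNE 0 ?_
      have hd0 := hMnz d (Multiset.mem_toFinset.1 hd)
      exact (eventually_linearIndependent_rotComb hbc hd0 0).and
        (eventually_linearIndependent_rotComb hbc.pair_neg_swap hd0 0)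
    filter_upwards [Ioo_mem_nhdsLT (neg_lt_zero.2 (by positivity : (0 : ℝ) < π / 2)),
      nhdsWithin_le_nhds (eventually_nonneg_rotComb hb hcb), hind] with t ht hu hM
    exact ⟨ht, hu, fun d hd => hM d (Multiset.mem_toFinset.2 hd)⟩
  obtain ⟨ε, hε, hsub⟩ := mem_nhdsLT_iff_exists_Ioo_subset.mp hgood
  have hinj := (injOn_rotComb_cons hbc M).mono fun t (ht : t ∈ Ioo ε 0) =>
    show t ∈ {t ∈ Ioo _ _ | _} from ⟨(hsub ht).1, fun d hd => ((hsub ht).2.2 d hd).1⟩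
  refine ((Ioo_infinite hε).image hinj).mono ?_
  rintro _ ⟨t, ht, rfl⟩
  obtain ⟨htI, hu, hM⟩ := hsub ht
  exact ⟨hL.1.rotate hu (rotComb_neg_nonneg hb hc (Ioo_subset_Icc_self htI)) hM,
    by simpa using hL.2⟩

/-- A nonsingular completely positive matrix whose graph is a tree has infinitely many
minimal CP factorizations. -/
theorem stmt_6 (n : ℕ) (hn : 2 ≤ n) (A : Matrix (Fin n) (Fin n) ℝ)
    (hCP : IsCP A) (hns : A.det ≠ 0) (htree : (matGraph A).IsTree) :
    {L | IsMinCPRep A L}.Infinite := by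
  obtain ⟨L, hL⟩ := hCP.exists_isMinCPRep
  obtain ⟨b, hb, c, hc, hbc, hcb⟩ :=
    hL.1.exists_ne_support_subset_of_isTree hn htree (hL.1.le_card_of_det_ne_zero hns)
  obtain ⟨M, rfl⟩ := Multiset.exists_eq_cons_cons hb hc hbc
  exact hL.infinite_setOf_of_support_subset hcb
end

section
/- Let A be an n×n nonsingular positive semidefinite nonnegative matrix whose graph is bipartite. Then for every index i there exists δ > 0 (namely δ = det A / det A(i)) such that A − δE_{ii} is positive semidefinite, singular, nonnegative, and has the same graph as A. -/
/-!
Since `A` is nonsingular and positive semidefinite it is positive definite, and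
`det A(i) / det A = (A⁻¹)ᵢᵢ`, so `δ = 1 / (A⁻¹)ᵢᵢ > 0`. With `eᵢ` the `i`-th unit vector, the block
matrix `[A eᵢ; eᵢᵀ (A⁻¹)ᵢᵢ]` is positive semidefinite, because its Schur complement with respect to
`A` vanishes; its Schur complement with respect to the corner `(A⁻¹)ᵢᵢ` is `A - δ Eᵢᵢ`, which is
therefore positive semidefinite. Expanding along row `i` gives `det (A - c Eᵢᵢ) = det A - c det A(i)`,
which vanishes at `c = δ`. Only the diagonal entry `(i, i)` changes, and it stays nonnegative as a
diagonal entry of a positive semidefinite matrix, so nonnegativity and the graph are preserved.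
-/

open Matrix

namespace Matrix

variable {ι R : Type*} [Fintype ι] [DecidableEq ι] [CommRing R]

theorem det_updateRow_single_self (A : Matrix ι ι R) (i : ι) :
    (A.updateRow i (Pi.single i 1)).det = (A.submatrix ((↑) : {j // j ≠ i} → ι) (↑)).det := by
  rw [← det_submatrix_equiv_self (Equiv.sumCompl (· = i))]
  set M := (A.updateRow i (Pi.single i 1)).submatrix (Equiv.sumCompl (· = i))
    (Equiv.sumCompl (· = i))
  have h₁₁ : M.toBlocks₁₁ ⟨i, rfl⟩ ⟨i, rfl⟩ = 1 := by simp [M, toBlocks₁₁]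
  have h₁₂ : M.toBlocks₁₂ = 0 := by
    ext ⟨j, rfl⟩ ⟨l, hl⟩
    simp [M, toBlocks₁₂, Pi.single_eq_of_ne hl]
  have h₂₂ : M.toBlocks₂₂ = A.submatrix (↑) (↑) := by
    ext ⟨j, hj⟩ ⟨l, hl⟩
    simp [M, toBlocks₂₂, updateRow_ne hj]
  rw [← fromBlocks_toBlocks M, h₁₂, det_fromBlocks_zero₁₂,
    det_eq_elem_of_subsingleton _ ⟨i, rfl⟩, h₁₁, h₂₂, one_mul]

theorem adjugate_apply_self (A : Matrix ι ι R) (i : ι) :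
    A.adjugate i i = (A.submatrix ((↑) : {j // j ≠ i} → ι) (↑)).det := by
  rw [adjugate_apply, det_updateRow_single_self]

theorem det_sub_smul_single (A : Matrix ι ι R) (i : ι) (c : R) :
    (A - c • single i i 1).det =
      A.det - c * (A.submatrix ((↑) : {j // j ≠ i} → ι) (↑)).det := by
  have hrow : A - c • single i i 1 = A.updateRow i (A i + (-c) • Pi.single i 1) := by
    ext j l
    rcases eq_or_ne j i with rfl | hj
    · simp [Pi.single_apply, single_apply, eq_comm, sub_eq_add_neg]
    · simp [updateRow_ne hj, single_apply_of_row_ne hj.symm]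
  rw [hrow, det_updateRow_add, det_updateRow_smul, updateRow_eq_self, det_updateRow_single_self]
  ring

omit [Fintype ι] in
theorem sub_smul_single_apply_of_ne (A : Matrix ι ι R) (i : ι) (c : R) {j l : ι} (h : j ≠ l) :
    (A - c • single i i (1 : R)) j l = A j l := by
  simp [single_apply_of_ne i i c j l fun hil => h (hil.1.symm.trans hil.2)]

end Matrix

theorem Matrix.inv_apply_self {ι K : Type*} [Fintype ι] [DecidableEq ι] [Field K]
    (A : Matrix ι ι K) (i : ι) :
    A⁻¹ i i = (A.submatrix ((↑) : {j // j ≠ i} → ι) (↑)).det / A.det := by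
  rw [inv_def, smul_apply, adjugate_apply_self, Ring.inverse_eq_inv', smul_eq_mul, inv_mul_eq_div]

namespace Matrix.PosDef

open scoped ComplexOrder

variable {ι 𝕜 : Type*} [Fintype ι] [DecidableEq ι] [RCLike 𝕜]

theorem posSemidef_sub_inv_inv_apply_smul_single {A : Matrix ι ι 𝕜} (hA : A.PosDef) (i : ι) :
    (A - (A⁻¹ i i)⁻¹ • single i i 1).PosSemidef := by
  let _ := hA.isUnit.invertible
  have hpos : 0 < A⁻¹ i i := hA.inv.diag_pos
  let e : Matrix ι Unit 𝕜 := replicateCol Unit (Pi.single i 1)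
  let d : Matrix Unit Unit 𝕜 := A⁻¹ i i • 1
  have hd : d.PosDef := PosDef.one.smul hpos
  let _ := hd.isUnit.invertible
  have hd_inv : d⁻¹ = (A⁻¹ i i)⁻¹ • 1 :=
    inv_eq_left_inv (by simp [d, smul_smul, mul_inv_cancel₀ hpos.ne'])
  have hblock : (fromBlocks A e eᴴ d).PosSemidef := by
    rw [hA.fromBlocks₁₁]
    convert PosSemidef.zero
    ext
    simp [e, d, mul_apply, Pi.single_apply]
  have hcompl : e * d⁻¹ * eᴴ = (A⁻¹ i i)⁻¹ • single i i 1 := by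
    rw [hd_inv, Matrix.mul_smul, Matrix.mul_one, Matrix.smul_mul, conjTranspose_replicateCol,
      ← vecMulVec_eq, single_eq_single_vecMulVec_single, Pi.star_single, star_one]
  rwa [PosDef.fromBlocks₂₂ _ _ hd, hcompl] at hblock

end Matrix.PosDef

theorem matGraph_eq_of_offDiag_eq {n : ℕ} {A B : Matrix (Fin n) (Fin n) ℝ}
    (h : ∀ j l, j ≠ l → B j l = A j l) : matGraph B = matGraph A := by
  ext j l
  simp only [matGraph, ne_eq]
  constructor <;> rintro ⟨hjl, hA⟩ <;> refine ⟨hjl, ?_⟩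
  · rwa [h j l hjl, h l j (Ne.symm hjl)] at hA
  · rwa [h j l hjl, h l j (Ne.symm hjl)]

theorem stmt_13_general (n : ℕ) (A : Matrix (Fin n) (Fin n) ℝ)
    (hns : A.det ≠ 0) (hpsd : A.PosSemidef) (hApos : ∀ i j, 0 ≤ A i j) :
    ∀ i : Fin n, ∃ δ : ℝ,
      δ = A.det / (A.submatrix (fun x : {j : Fin n // j ≠ i} => (x : Fin n))
            (fun x : {j : Fin n // j ≠ i} => (x : Fin n))).det ∧
      0 < δ ∧
      (A - δ • Matrix.single i i (1 : ℝ)).PosSemidef ∧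
      (A - δ • Matrix.single i i (1 : ℝ)).det = 0 ∧
      (∀ j l, 0 ≤ (A - δ • Matrix.single i i (1 : ℝ)) j l) ∧
      matGraph (A - δ • Matrix.single i i (1 : ℝ)) = matGraph A := by
  intro i
  have hA : A.PosDef := hpsd.posDef_iff_det_ne_zero.mpr hns
  have hpos : 0 < A⁻¹ i i := hA.inv.diag_pos
  have hminor : (A.submatrix ((↑) : {j // j ≠ i} → Fin n) (↑)).det ≠ 0 := fun h =>
    hpos.ne' (by rw [inv_apply_self, h, zero_div])
  have hδ : A.det / (A.submatrix ((↑) : {j // j ≠ i} → Fin n) (↑)).det = (A⁻¹ i i)⁻¹ := by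
    rw [inv_apply_self, inv_div]
  have hpsd' := hA.posSemidef_sub_inv_inv_apply_smul_single i
  refine ⟨_, rfl, ?_, ?_, ?_, fun j l => ?_, matGraph_eq_of_offDiag_eq fun j l =>
    sub_smul_single_apply_of_ne A i _⟩
  · exact hδ ▸ inv_pos.mpr hpos
  · rwa [hδ]
  · rw [det_sub_smul_single, div_mul_cancel₀ _ hminor, sub_self]
  · rcases eq_or_ne j l with rfl | hjl
    · exact hδ ▸ hpsd'.diag_nonneg
    · exact (sub_smul_single_apply_of_ne A i _ hjl).symm ▸ hApos j l

/-- If `A` is nonsingular PSD nonnegative with bipartite graph, then for every `i`,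
`δ = det A / det A(i) > 0` makes `A - δ Eᵢᵢ` PSD, singular, nonnegative, with the
same graph as `A`. -/
theorem stmt_13 (n : ℕ) (A : Matrix (Fin n) (Fin n) ℝ)
    (hns : A.det ≠ 0) (hpsd : A.PosSemidef) (hApos : ∀ i j, 0 ≤ A i j)
    (hbip : (matGraph A).Colorable 2) :
    ∀ i : Fin n, ∃ δ : ℝ,
      δ = A.det / (A.submatrix (fun x : {j : Fin n // j ≠ i} => (x : Fin n))
            (fun x : {j : Fin n // j ≠ i} => (x : Fin n))).det ∧
      0 < δ ∧
      (A - δ • Matrix.single i i (1 : ℝ)).PosSemidef ∧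
      (A - δ • Matrix.single i i (1 : ℝ)).det = 0 ∧
      (∀ j l, 0 ≤ (A - δ • Matrix.single i i (1 : ℝ)) j l) ∧
      matGraph (A - δ • Matrix.single i i (1 : ℝ)) = matGraph A :=
  stmt_13_general n A hns hpsd hApos
end

section
/- For any completely positive n×n matrix A, the minimal face of the cone CP_n containing A equals the conical hull of { bb^T : b ∈ ℝⁿ₊, A − bb^T ∈ CP_n }. -/
open Matrix

/-- A face of the cone `CP_n`: a subcone `F` such that `X, Y ∈ CP_n` and `X + Y ∈ F`
imply `X, Y ∈ F`. -/
def IsFaceCP (n : ℕ) (F : Set (Matrix (Fin n) (Fin n) ℝ)) : Prop :=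
  (∀ X ∈ F, IsCP X) ∧
  (∀ X ∈ F, ∀ c : ℝ, 0 ≤ c → c • X ∈ F) ∧
  (∀ X ∈ F, ∀ Y ∈ F, X + Y ∈ F) ∧
  (∀ X Y : Matrix (Fin n) (Fin n) ℝ, IsCP X → IsCP Y → X + Y ∈ F → X ∈ F ∧ Y ∈ F)

/-! A matrix `Z ∈ CP_n` lies in every face containing `A` as soon as `A - t Z ∈ CP_n` for some
`t > 0`, since `A = t Z + (A - t Z)`; and the set of such `Z` is itself a face. So the minimal
face is `{Z ∈ CP_n | ∃ t > 0, A - t Z ∈ CP_n}`. Writing `Z = ∑ bⱼ bⱼᵀ`, each `A - t bⱼ bⱼᵀ` is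
`(A - t Z) + t ∑_{i ≠ j} bᵢ bᵢᵀ`, which puts `Z` in the conical hull; conversely, if
`Z = ∑ cᵢ bᵢ bᵢᵀ` with `C = ∑ cᵢ`, then `(1 + C) A - Z = A + ∑ cᵢ (A - bᵢ bᵢᵀ) ∈ CP_n`.
-/

section

variable {n : ℕ} {A : Matrix (Fin n) (Fin n) ℝ}

def outerSum (l : List (Fin n → ℝ)) : Matrix (Fin n) (Fin n) ℝ :=
  (l.map fun b => vecMulVec b b).sum

lemma vecMulVec_smul_smul_self (t : ℝ) (b : Fin n → ℝ) :
    vecMulVec (t • b) (t • b) = (t * t) • vecMulVec b b := by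
  rw [smul_vecMulVec, vecMulVec_smul, smul_smul]

lemma isCP_iff_exists_list {X : Matrix (Fin n) (Fin n) ℝ} :
    IsCP X ↔ ∃ l : List (Fin n → ℝ), (∀ b ∈ l, 0 ≤ b) ∧ (∀ b ∈ l, b ≠ 0) ∧
      l.Pairwise (fun b c => LinearIndependent ℝ ![b, c]) ∧ outerSum l = X := by
  constructor
  · rintro ⟨L, hpos, hne, ⟨l, rfl, hl⟩, hsum⟩
    exact ⟨l, fun b hb i => hpos b hb i, hne, hl, by simpa [outerSum] using hsum⟩
  · rintro ⟨l, hpos, hne, hl, rfl⟩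
    exact ⟨l, fun b hb => hpos b hb, hne, ⟨l, rfl, hl⟩, by simp [outerSum]⟩

lemma isCP_zero : IsCP (0 : Matrix (Fin n) (Fin n) ℝ) :=
  isCP_iff_exists_list.2 ⟨[], by simp, by simp, .nil, rfl⟩

-- Since `IsCP` asks for pairwise independent summands, a new summand `a • c` parallel to an old
-- one `c` is merged with it into `√(a * a + 1) • c`.
lemma isCP_vecMulVec_add_outerSum {l : List (Fin n → ℝ)} (hpos : ∀ c ∈ l, 0 ≤ c)
    (hne : ∀ c ∈ l, c ≠ 0) (hl : l.Pairwise (fun b c => LinearIndependent ℝ ![b, c]))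
    {b : Fin n → ℝ} (hb : 0 ≤ b) : IsCP (vecMulVec b b + outerSum l) := by
  by_cases hb0 : b = 0
  · simpa [hb0] using isCP_iff_exists_list.2 ⟨l, hpos, hne, hl, rfl⟩
  by_cases hpar : ∃ c ∈ l, ¬LinearIndependent ℝ ![b, c]
  · obtain ⟨c, hc, hbc⟩ := hpar
    obtain ⟨a, rfl⟩ : ∃ a : ℝ, a • c = b := by
      simpa [linearIndependent_fin2, hne c hc] using hbc
    have hmerge : vecMulVec (a • c) (a • c) + outerSum l =
        vecMulVec (√(a * a + 1) • c) (√(a * a + 1) • c) + outerSum (l.erase c) := by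
      rw [outerSum, ← List.sum_map_erase _ hc, vecMulVec_smul_smul_self, vecMulVec_smul_smul_self,
        Real.mul_self_sqrt (add_nonneg (mul_self_nonneg a) zero_le_one), ← add_assoc, add_smul,
        one_smul, outerSum]
    have hsub : (l.erase c).Sublist l := List.erase_sublist
    rw [hmerge]
    exact isCP_vecMulVec_add_outerSum (fun d hd => hpos d (hsub.mem hd))
      (fun d hd => hne d (hsub.mem hd)) (hl.sublist hsub)
      (smul_nonneg (Real.sqrt_nonneg _) (hpos c hc))
  · push Not at hpar
    refine isCP_iff_exists_list.2 ⟨b :: l, ?_, ?_, .cons hpar hl, by simp [outerSum]⟩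
    · simpa using ⟨hb, hpos⟩
    · simpa using ⟨hb0, hne⟩
termination_by l.length
decreasing_by exact List.length_erase_of_mem hc ▸ Nat.pred_lt (List.length_pos_of_mem hc).ne'

lemma IsCP.vecMulVec_add {S : Matrix (Fin n) (Fin n) ℝ} (hS : IsCP S) {b : Fin n → ℝ}
    (hb : 0 ≤ b) : IsCP (vecMulVec b b + S) := by
  obtain ⟨l, hpos, hne, hl, rfl⟩ := isCP_iff_exists_list.1 hS
  exact isCP_vecMulVec_add_outerSum hpos hne hl hb

lemma IsCP.add_outerSum {X : Matrix (Fin n) (Fin n) ℝ} (hX : IsCP X) :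
    ∀ {l : List (Fin n → ℝ)}, (∀ c ∈ l, 0 ≤ c) → IsCP (X + outerSum l)
  | [], _ => by simpa [outerSum] using hX
  | c :: l, hpos => by
    have hsplit : X + outerSum (c :: l) = vecMulVec c c + (X + outerSum l) := by
      simp only [outerSum, List.map_cons, List.sum_cons]; abel
    rw [hsplit]
    exact (hX.add_outerSum fun d hd => hpos d (List.mem_cons_of_mem c hd)).vecMulVec_add
      (hpos c List.mem_cons_self)

lemma IsCP.add {X Y : Matrix (Fin n) (Fin n) ℝ} (hX : IsCP X) (hY : IsCP Y) : IsCP (X + Y) := by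
  obtain ⟨l, hpos, -, -, rfl⟩ := isCP_iff_exists_list.1 hY
  exact hX.add_outerSum hpos

lemma isCP_sum {ι : Type*} (s : Finset ι) {f : ι → Matrix (Fin n) (Fin n) ℝ}
    (hf : ∀ i ∈ s, IsCP (f i)) : IsCP (∑ i ∈ s, f i) :=
  Finset.sum_induction f IsCP (fun _ _ => IsCP.add) isCP_zero hf

lemma isCP_vecMulVec {b : Fin n → ℝ} (hb : 0 ≤ b) : IsCP (vecMulVec b b) := by
  simpa using isCP_zero.vecMulVec_add hb

lemma isCP_iff_exists_sum {X : Matrix (Fin n) (Fin n) ℝ} :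
    IsCP X ↔ ∃ (k : ℕ) (b : Fin k → Fin n → ℝ), (∀ i, 0 ≤ b i) ∧
      ∑ i, vecMulVec (b i) (b i) = X := by
  constructor
  · intro hX
    obtain ⟨l, hpos, -, -, rfl⟩ := isCP_iff_exists_list.1 hX
    exact ⟨l.length, fun i => l[i], fun i => hpos _ (List.getElem_mem _),
      Fin.sum_univ_fun_getElem l fun b => vecMulVec b b⟩
  · rintro ⟨k, b, hb, rfl⟩
    exact isCP_sum _ fun i _ => isCP_vecMulVec (hb i)

lemma IsCP.smul {X : Matrix (Fin n) (Fin n) ℝ} (hX : IsCP X) {t : ℝ} (ht : 0 ≤ t) :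
    IsCP (t • X) := by
  obtain ⟨k, b, hb, rfl⟩ := isCP_iff_exists_sum.1 hX
  refine isCP_iff_exists_sum.2 ⟨k, fun i => √t • b i,
    fun i => smul_nonneg (Real.sqrt_nonneg t) (hb i), ?_⟩
  simp only [vecMulVec_smul_smul_self, Real.mul_self_sqrt ht, Finset.smul_sum]

def generatedFaceCP (A : Matrix (Fin n) (Fin n) ℝ) : Set (Matrix (Fin n) (Fin n) ℝ) :=
  {Z | IsCP Z ∧ ∃ t : ℝ, 0 < t ∧ IsCP (A - t • Z)}

lemma self_mem_generatedFaceCP (hA : IsCP A) : A ∈ generatedFaceCP A :=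
  ⟨hA, 1, one_pos, by simpa using isCP_zero⟩

lemma generatedFaceCP_subset {F : Set (Matrix (Fin n) (Fin n) ℝ)} (hF : IsFaceCP n F)
    (hAF : A ∈ F) : generatedFaceCP A ⊆ F := by
  rintro Z ⟨hZ, t, ht, hAZ⟩
  have htZ : t • Z ∈ F := (hF.2.2.2 _ _ (hZ.smul ht.le) hAZ (by simpa using hAF)).1
  simpa [smul_smul, inv_mul_cancel₀ ht.ne'] using hF.2.1 _ htZ t⁻¹ (inv_nonneg.2 ht.le)

lemma isFaceCP_generatedFaceCP (hA : IsCP A) : IsFaceCP n (generatedFaceCP A) := by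
  refine ⟨fun Z hZ => hZ.1, ?_, ?_, ?_⟩
  · rintro Z ⟨hZ, t, ht, hAZ⟩ c hc
    refine ⟨hZ.smul hc, ?_⟩
    rcases hc.eq_or_lt with rfl | hc
    · exact ⟨1, one_pos, by simpa using hA⟩
    · exact ⟨t / c, div_pos ht hc, by rwa [smul_smul, div_mul_cancel₀ t hc.ne']⟩
  · rintro X ⟨hX, s, hs, hAX⟩ Y ⟨hY, t, ht, hAY⟩
    refine ⟨hX.add hY, s * t / (s + t), by positivity, ?_⟩
    have hconvex : A - (s * t / (s + t)) • (X + Y) =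
        (t / (s + t)) • (A - s • X) + (s / (s + t)) • (A - t • Y) := by
      match_scalars <;> field_simp; ring
    rw [hconvex]
    exact (hAX.smul (by positivity)).add (hAY.smul (by positivity))
  · rintro X Y hX hY ⟨-, t, ht, hAXY⟩
    refine ⟨⟨hX, t, ht, ?_⟩, ⟨hY, t, ht, ?_⟩⟩
    · convert hAXY.add (hY.smul ht.le) using 1; module
    · convert hAXY.add (hX.smul ht.le) using 1; module

lemma generatedFaceCP_eq (hA : IsCP A) : generatedFaceCP A =
    {X | ∃ (k : ℕ) (c : Fin k → ℝ) (b : Fin k → (Fin n → ℝ)),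
      (∀ i, 0 ≤ c i) ∧ (∀ i, ∀ l, 0 ≤ b i l) ∧ (∀ i, IsCP (A - vecMulVec (b i) (b i))) ∧
      X = ∑ i, c i • vecMulVec (b i) (b i)} := by
  ext Z
  constructor
  · rintro ⟨hZ, t, ht, hAZ⟩
    obtain ⟨k, b, hb, hZb⟩ := isCP_iff_exists_sum.1 hZ
    refine ⟨k, fun _ => t⁻¹, fun j => √t • b j, fun _ => inv_nonneg.2 ht.le,
      fun j => smul_nonneg (Real.sqrt_nonneg t) (hb j), fun j => ?_, ?_⟩
    · have hrest : IsCP (∑ i ∈ Finset.univ.erase j, vecMulVec (b i) (b i)) :=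
        isCP_sum _ fun i _ => isCP_vecMulVec (hb i)
      have hsplit := Finset.add_sum_erase Finset.univ (fun i => vecMulVec (b i) (b i))
        (Finset.mem_univ j)
      rw [vecMulVec_smul_smul_self, Real.mul_self_sqrt ht.le]
      convert hAZ.add (hrest.smul ht.le) using 1
      rw [← hZb, ← hsplit]
      module
    · simp only [vecMulVec_smul_smul_self, Real.mul_self_sqrt ht.le, smul_smul,
        inv_mul_cancel₀ ht.ne', one_smul, hZb]
  · rintro ⟨k, c, b, hc, hb, hAb, rfl⟩
    set C := ∑ i, c i
    have hC : 0 ≤ C := Finset.sum_nonneg fun i _ => hc i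
    refine ⟨isCP_sum _ fun i _ => (isCP_vecMulVec (hb i)).smul (hc i), (1 + C)⁻¹,
      by positivity, ?_⟩
    have hsum : ∑ i, c i • (A - vecMulVec (b i) (b i)) =
        C • A - ∑ i, c i • vecMulVec (b i) (b i) := by
      simp only [smul_sub, Finset.sum_sub_distrib, Finset.sum_smul, C]
    have hrescale : A - (1 + C)⁻¹ • ∑ i, c i • vecMulVec (b i) (b i) =
        (1 + C)⁻¹ • (A + ∑ i, c i • (A - vecMulVec (b i) (b i))) := by
      rw [hsum]
      match_scalars <;> field_simp
    rw [hrescale]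
    exact (hA.add (isCP_sum _ fun i _ => (hAb i).smul (hc i))).smul (by positivity)

end

/-- The minimal face of `CP_n` containing a completely positive `A` is the conical hull
of `{ bbᵀ : b ≥ 0, A - bbᵀ ∈ CP_n }`. -/
theorem stmt_18 (n : ℕ) (A : Matrix (Fin n) (Fin n) ℝ) (hA : IsCP A) :
    ⋂₀ {F | IsFaceCP n F ∧ A ∈ F} =
      {X | ∃ (k : ℕ) (c : Fin k → ℝ) (b : Fin k → (Fin n → ℝ)),
        (∀ i, 0 ≤ c i) ∧ (∀ i, ∀ l, 0 ≤ b i l) ∧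
        (∀ i, IsCP (A - vecMulVec (b i) (b i))) ∧
        X = ∑ i, c i • vecMulVec (b i) (b i)} := by
  rw [← generatedFaceCP_eq hA]
  refine (Set.sInter_subset_of_mem ?_).antisymm
    (Set.subset_sInter fun F hF => generatedFaceCP_subset hF.1 hF.2)
  exact ⟨isFaceCP_generatedFaceCP hA, self_mem_generatedFaceCP hA⟩
end
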